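/- arXiv:1302.1999 — 5 statements merged into one kernel-verified Lean document; each statement's English description precedes it below -/
import Mathlib

section
/- The bivariate generating function of any stationary distribution of the exponentially-delayed-arrivals queue satisfies the boundary-value functional equation: for all complex z, y with |z| ≤ 1 and |y| ≤ 1, z·P(z,y) = (ρ(qy+pz) + 1−ρ)·[(z−1)·P(0, qy+pz) + P(z, qy+pz)]. -/
open scoped BigOperators

noncomputable section

/-- `b j l = C(l,j) p^j q^(l-j)` with `p = 1 - q`, and `b j l = 0` for `j > l`. -/
def binomB (q : ℝ) (j l : ℕ) : ℝ :=
  if j ≤ l then (Nat.choose l j : ℝ) * (1 - q) ^ j * q ^ (l - j) else 0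

/-- Transition kernel of the chain on `ℕ × ℕ`: from `(n, l)` move to
`(max (n-1) 0 + j, l + 1 - j)` with probability `ρ * b j (l+1)` for `0 ≤ j ≤ l + 1`,
and to `(max (n-1) 0 + j, l - j)` with probability `(1 - ρ) * b j l` for `0 ≤ j ≤ l`.
(In `ℕ`, `n - 1` is truncated subtraction, i.e. `max (n-1) 0`.) -/
def kernel (ρ q : ℝ) (s s' : ℕ × ℕ) : ℝ :=
  ρ * ∑ j ∈ Finset.range (s.2 + 2),
        (if s' = (s.1 - 1 + j, s.2 + 1 - j) then binomB q j (s.2 + 1) else 0) +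
    (1 - ρ) * ∑ j ∈ Finset.range (s.2 + 1),
        (if s' = (s.1 - 1 + j, s.2 - j) then binomB q j s.2 else 0)

/-- Bivariate generating function `P(z,y) = Σ_{n,l} P_{n,l} z^n y^l`. -/
def gf (P : ℕ × ℕ → ℝ) (z y : ℂ) : ℂ :=
  ∑' s : ℕ × ℕ, (P s : ℂ) * z ^ s.1 * y ^ s.2

end

open Finset

/-! Write `w = qy + pz`. From `(n, l)` the chain moves `n` to `n - 1` and then splits `l`
(or `l + 1`, with probability `ρ`) binomially with parameter `p` between the two coordinates, so by
the binomial theorem one step maps the monomial `z^n y^l` to `z^(n-1) w^l (ρ w + 1 - ρ)` in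
expectation. Stationarity (with Fubini, licensed by nonnegativity) turns this into
`P(z, y) = (ρ w + 1 - ρ) Σ P_{n,l} z^(n-1) w^l`, and `z · z^(n-1) = z^n + (z - 1) 0^n` (truncated
subtraction) produces the boundary term `(z - 1) P(0, w)`. -/

lemma binomB_nonneg {q : ℝ} (hq0 : 0 ≤ q) (hq1 : q ≤ 1) (j l : ℕ) : 0 ≤ binomB q j l := by
  have : 0 ≤ 1 - q := by linarith
  unfold binomB
  split <;> positivity

lemma sum_binomB_mul_pow (q : ℝ) (k m : ℕ) (z y : ℂ) :
    ∑ j ∈ range (m + 1), (binomB q j m : ℂ) * (z ^ (k + j) * y ^ (m - j)) =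
      z ^ k * ((q : ℂ) * y + (1 - (q : ℂ)) * z) ^ m := by
  rw [add_comm ((q : ℂ) * y), add_pow, mul_sum]
  refine sum_congr rfl fun j hj => ?_
  rw [binomB, if_pos (Nat.lt_succ_iff.mp (mem_range.mp hj)), mul_pow, mul_pow]
  push_cast
  ring

lemma kernel_nonneg {ρ q : ℝ} (hρ0 : 0 ≤ ρ) (hρ1 : ρ ≤ 1) (hq0 : 0 ≤ q) (hq1 : q ≤ 1)
    (s s' : ℕ × ℕ) : 0 ≤ kernel ρ q s s' := by
  have : 0 ≤ 1 - ρ := by linarith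
  unfold kernel
  refine add_nonneg (mul_nonneg hρ0 (sum_nonneg fun j _ => ?_))
    (mul_nonneg this (sum_nonneg fun j _ => ?_)) <;>
  · split
    · exact binomB_nonneg hq0 hq1 _ _
    · exact le_rfl

lemma hasSum_sum_ite_eq_mul {α ι R : Type*} [DecidableEq α] [NonUnitalNonAssocSemiring R]
    [TopologicalSpace R] [ContinuousAdd R] (t : Finset ι) (f : ι → α) (c : ι → R) (g : α → R) :
    HasSum (fun a => (∑ j ∈ t, if a = f j then c j else 0) * g a) (∑ j ∈ t, c j * g (f j)) := by
  simp_rw [sum_mul]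
  refine hasSum_sum fun j _ => ?_
  convert hasSum_ite_eq (f j) (c j * g (f j)) using 1
  ext a
  split_ifs with h <;> simp [h]

lemma hasSum_kernel_mul_pow (ρ q : ℝ) (z y : ℂ) (s : ℕ × ℕ) :
    HasSum (fun s' : ℕ × ℕ => (kernel ρ q s s' : ℂ) * (z ^ s'.1 * y ^ s'.2))
      (z ^ (s.1 - 1) * ((q : ℂ) * y + (1 - (q : ℂ)) * z) ^ s.2 *
        ((ρ : ℂ) * ((q : ℂ) * y + (1 - (q : ℂ)) * z) + 1 - (ρ : ℂ))) := by
  have hsplit := ((hasSum_sum_ite_eq_mul (range (s.2 + 2)) (fun j => (s.1 - 1 + j, s.2 + 1 - j))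
      (fun j => (binomB q j (s.2 + 1) : ℂ)) fun s' => z ^ s'.1 * y ^ s'.2).mul_left (ρ : ℂ)).add
    ((hasSum_sum_ite_eq_mul (range (s.2 + 1)) (fun j => (s.1 - 1 + j, s.2 - j))
      (fun j => (binomB q j s.2 : ℂ)) fun s' => z ^ s'.1 * y ^ s'.2).mul_left (1 - (ρ : ℂ)))
  simp only [sum_binomB_mul_pow] at hsplit
  convert hsplit.congr_fun fun s' => ?_ using 1
  · rfl
  · ring
  · simp only [kernel, Complex.ofReal_add, Complex.ofReal_mul, Complex.ofReal_sub,
      Complex.ofReal_one, Complex.ofReal_sum, apply_ite Complex.ofReal, Complex.ofReal_zero]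
    ring

lemma hasSum_kernel (ρ q : ℝ) (s : ℕ × ℕ) : HasSum (kernel ρ q s) 1 := by
  have h := hasSum_kernel_mul_pow ρ q 1 1 s
  simp only [one_pow, mul_one] at h
  exact Complex.hasSum_ofReal.mp (by convert h using 1; push_cast; ring)

lemma norm_convex_combination_le_one {q : ℝ} (hq0 : 0 ≤ q) (hq1 : q ≤ 1) {z y : ℂ}
    (hz : ‖z‖ ≤ 1) (hy : ‖y‖ ≤ 1) : ‖(q : ℂ) * y + (1 - (q : ℂ)) * z‖ ≤ 1 := by
  have := convex_closedBall (0 : ℂ) 1 (mem_closedBall_zero_iff.mpr hy)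
    (mem_closedBall_zero_iff.mpr hz) hq0 (by linarith : 0 ≤ 1 - q) (by ring)
  simpa [Complex.real_smul] using this

lemma summable_ofReal_mul_pow_mul_pow {P : ℕ × ℕ → ℝ} (hP : Summable P) {a b : ℂ}
    (ha : ‖a‖ ≤ 1) (hb : ‖b‖ ≤ 1) : Summable fun s : ℕ × ℕ => (P s : ℂ) * a ^ s.1 * b ^ s.2 := by
  refine Summable.of_norm_bounded (summable_abs_iff.mpr hP) fun s => ?_
  rw [norm_mul, norm_mul, Complex.norm_real, Real.norm_eq_abs, norm_pow, norm_pow]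
  calc |P s| * ‖a‖ ^ s.1 * ‖b‖ ^ s.2 ≤ |P s| * 1 * 1 := by
        gcongr
        · exact pow_le_one₀ (norm_nonneg a) ha
        · exact pow_le_one₀ (norm_nonneg b) hb
    _ = |P s| := by ring

lemma tsum_mul_eq_tsum_mul_tsum_kernel {α : Type*} {K : α → α → ℝ} (hK : ∀ s s', 0 ≤ K s s')
    (hrow : ∀ s, HasSum (K s) 1) {P : α → ℝ} (hP : ∀ s, 0 ≤ P s) (hPs : Summable P)
    (hstat : ∀ s', ∑' s, P s * K s s' = P s') {g : α → ℂ} (hg : ∀ s, ‖g s‖ ≤ 1) :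
    ∑' s', (P s' : ℂ) * g s' = ∑' s, (P s : ℂ) * ∑' s', (K s s' : ℂ) * g s' := by
  have hnn : ∀ t : α × α, 0 ≤ P t.1 * K t.1 t.2 := fun t => mul_nonneg (hP t.1) (hK t.1 t.2)
  have hflow : Summable fun t : α × α => P t.1 * K t.1 t.2 := by
    refine (summable_prod_of_nonneg hnn).mpr ⟨fun s => ((hrow s).mul_left (P s)).summable, ?_⟩
    simpa only [((hrow _).mul_left _).tsum_eq, mul_one] using hPs
  have hflowC : Summable (Function.uncurry fun s s' => ((P s * K s s' : ℝ) : ℂ) * g s') := by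
    refine Summable.of_norm_bounded hflow fun t => ?_
    rw [Function.uncurry_apply_pair, norm_mul, Complex.norm_real, Real.norm_of_nonneg (hnn t)]
    exact mul_le_of_le_one_right (hnn t) (hg t.2)
  calc ∑' s', (P s' : ℂ) * g s'
      = ∑' s', ∑' s, ((P s * K s s' : ℝ) : ℂ) * g s' := by
        refine tsum_congr fun s' => ?_
        rw [← hstat s', Complex.ofReal_tsum, tsum_mul_right]
    _ = ∑' s, ∑' s', ((P s * K s s' : ℝ) : ℂ) * g s' := hflowC.tsum_comm
    _ = ∑' s, (P s : ℂ) * ∑' s', (K s s' : ℂ) * g s' := by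
        refine tsum_congr fun s => ?_
        rw [← tsum_mul_left]
        push_cast
        simp_rw [mul_assoc]

lemma mul_pow_sub_one_eq_add_zero_pow {R : Type*} [Ring R] (z : R) (n : ℕ) :
    z * z ^ (n - 1) = z ^ n + (z - 1) * 0 ^ n := by
  cases n with
  | zero => simp
  | succ m => simp [pow_succ']

lemma mul_tsum_pow_sub_one {P : ℕ × ℕ → ℝ} (hP : Summable P) {z w : ℂ} (hz : ‖z‖ ≤ 1)
    (hw : ‖w‖ ≤ 1) :
    z * ∑' s : ℕ × ℕ, (P s : ℂ) * z ^ (s.1 - 1) * w ^ s.2 = (z - 1) * gf P 0 w + gf P z w := by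
  rw [gf, gf, ← tsum_mul_left, ← tsum_mul_left,
    ← (summable_ofReal_mul_pow_mul_pow hP (by simp) hw).mul_left (z - 1) |>.tsum_add
      (summable_ofReal_mul_pow_mul_pow hP hz hw)]
  refine tsum_congr fun s => ?_
  linear_combination (P s : ℂ) * w ^ s.2 * mul_pow_sub_one_eq_add_zero_pow z s.1

theorem stmt0 (ρ q : ℝ) (hρ : ρ ∈ Set.Ioo (0 : ℝ) 1) (hq : q ∈ Set.Ioo (0 : ℝ) 1)
    (P : ℕ × ℕ → ℝ) (hpos : ∀ s, 0 ≤ P s) (hsum : HasSum P 1)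
    (hstat : ∀ s' : ℕ × ℕ, ∑' s : ℕ × ℕ, P s * kernel ρ q s s' = P s')
    (z y : ℂ) (hz : ‖z‖ ≤ 1) (hy : ‖y‖ ≤ 1) :
    z * gf P z y =
      ((ρ : ℂ) * ((q : ℂ) * y + (1 - (q : ℂ)) * z) + 1 - (ρ : ℂ)) *
        ((z - 1) * gf P 0 ((q : ℂ) * y + (1 - (q : ℂ)) * z) +
          gf P z ((q : ℂ) * y + (1 - (q : ℂ)) * z)) := by
  obtain ⟨hρ0, hρ1⟩ := hρ
  obtain ⟨hq0, hq1⟩ := hq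
  set w : ℂ := (q : ℂ) * y + (1 - (q : ℂ)) * z
  have hw : ‖w‖ ≤ 1 := norm_convex_combination_le_one hq0.le hq1.le hz hy
  have hgf : gf P z y = ∑' s : ℕ × ℕ, (P s : ℂ) * (z ^ (s.1 - 1) * w ^ s.2 * (ρ * w + 1 - ρ)) := by
    simp_rw [gf, mul_assoc]
    rw [tsum_mul_eq_tsum_mul_tsum_kernel (kernel_nonneg hρ0.le hρ1.le hq0.le hq1.le)
      (hasSum_kernel ρ q) hpos hsum.summable hstat fun s => ?_]
    · exact tsum_congr fun s => by rw [(hasSum_kernel_mul_pow ρ q z y s).tsum_eq]; ring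
    · rw [norm_mul, norm_pow, norm_pow]
      exact mul_le_one₀ (pow_le_one₀ (norm_nonneg z) hz) (by positivity)
        (pow_le_one₀ (norm_nonneg y) hy)
  rw [← mul_tsum_pow_sub_one hsum.summable hz hw, hgf, ← tsum_mul_left, ← tsum_mul_left,
    ← tsum_mul_left]
  exact tsum_congr fun s => by ring
end

section
/- Under the assumptions on F, the zeroth-order coefficient of the power expansion in q is P^(0)(z,y) = 1 + ρ(z−1). -/
open scoped BigOperators

noncomputable section

/-- Polynomials in `z` (outer variable) with coefficients polynomials in `y` (inner variable);
this is the ring in which the coefficients `P^(k)(z,y)` live. -/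
abbrev Bzy : Type := Polynomial (Polynomial ℂ)

/-- The variable `y` as an element of `Bzy` (the outer variable `Polynomial.X` is `z`). -/
def yB : Bzy := Polynomial.C Polynomial.X

/-- A complex constant as an element of `Bzy`. -/
def cB (c : ℂ) : Bzy := Polynomial.C (Polynomial.C c)

/-- The power series `u = z + q (y - z)` in the variable `q`, with coefficients in `Bzy`. -/
def useries : PowerSeries Bzy :=
  PowerSeries.C (R := Bzy) Polynomial.X + PowerSeries.X * PowerSeries.C (R := Bzy) (yB - Polynomial.X)

/-- The inclusion of complex constants into `Bzy[[q]]`. -/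
def constHom : ℂ →+* PowerSeries Bzy :=
  (PowerSeries.C (R := Bzy)).comp
    ((Polynomial.C : Polynomial ℂ →+* Bzy).comp (Polynomial.C : ℂ →+* Polynomial ℂ))

/-- Substitution of `u = z + q(y-z)` for the variable in a polynomial in `y`. -/
def substY : Polynomial ℂ →+* PowerSeries Bzy :=
  Polynomial.eval₂RingHom constHom useries

/-- Substitution `z ↦ z`, `y ↦ u = z + q(y-z)` in a polynomial in `z` and `y`. -/
def substZY : Bzy →+* PowerSeries Bzy :=
  Polynomial.eval₂RingHom substY (PowerSeries.C (R := Bzy) Polynomial.X)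

/-- The formal functional equation `z·F(z,y) = (1-ρ+ρu)·[(z-1)·F(0,u) + F(z,u)]`, where
`F = Σ_k q^k P^(k)(z,y)`, `F(0,u)` is obtained by setting `z = 0` (i.e. taking the coefficient
of `z^0`) and substituting `u` for `y`, and `F(z,u)` by substituting `u` for `y`; the `m`-th
coefficient of `F(z,u)` is `Σ_{k ≤ m} [q^(m-k)] (P^(k)(z, z + q(y-z)))`, and similarly
for `F(0,u)`. -/
def FuncEq (ρ : ℝ) (P : ℕ → Bzy) : Prop :=
  PowerSeries.C (R := Bzy) Polynomial.X * PowerSeries.mk (fun k => P k) =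
    (constHom (1 - (ρ : ℂ)) + constHom (ρ : ℂ) * useries) *
      (PowerSeries.C (R := Bzy) (Polynomial.X - 1) *
          PowerSeries.mk (fun m => ∑ k ∈ Finset.range (m + 1),
            PowerSeries.coeff (R := Bzy) (m - k) (substY ((P k).coeff 0))) +
        PowerSeries.mk (fun m => ∑ k ∈ Finset.range (m + 1),
          PowerSeries.coeff (R := Bzy) (m - k) (substZY (P k))))

/-- `P^(0)(z,y)` does not depend on `y`. -/
def IndepY (P : ℕ → Bzy) : Prop := ∀ n : ℕ, ∃ c : ℂ, (P 0).coeff n = Polynomial.C c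

/-- Boundary conditions: `P^(0)(0,1) = 1 - ρ` and `P^(k)(0,1) = 0` for all `k ≥ 1`. -/
def Boundary (ρ : ℝ) (P : ℕ → Bzy) : Prop :=
  ((P 0).coeff 0).eval 1 = 1 - (ρ : ℂ) ∧ ∀ k : ℕ, 1 ≤ k → ((P k).coeff 0).eval 1 = 0

/-- Derivative with respect to the inner variable `y`. -/
def dy (p : Bzy) : Bzy :=
  p.sum fun n a => Polynomial.C (Polynomial.derivative a) * Polynomial.X ^ n

/-- The polynomial `P^(k)(0,y) + (P^(k)(z,y) - P^(k)(0,y))/z`, where the quotient is exact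
polynomial division by the monic polynomial `z`. -/
def bracket (P : ℕ → Bzy) (k : ℕ) : Bzy :=
  Polynomial.C ((P k).coeff 0) + (P k - Polynomial.C ((P k).coeff 0)) /ₘ Polynomial.X

/-- `a_j^k(z) = ∂_y^j [P^(k)(0,y) + (P^(k)(z,y) - P^(k)(0,y))/z] |_{y=z}`, a polynomial
in the single variable `z`. -/
def aCoef (P : ℕ → Bzy) (j k : ℕ) : Polynomial ℂ :=
  Polynomial.eval₂ (RingHom.id (Polynomial ℂ)) Polynomial.X ((dy^[j]) (bracket P k))

/-- Reinterpret a polynomial in the single variable `z` as an element of `Bzy`. -/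
def embZ : Polynomial ℂ →+* Bzy := Polynomial.mapRingHom (Polynomial.C : ℂ →+* Polynomial ℂ)

/-- `A_j^k(z) = jρ a_{j-1}^{k-j}(z) + (1+ρ(z-1)) a_j^{k-j}(z)` for `1 ≤ j ≤ k`,
`A_0^0(z) = 1 + ρ(z-1)`, and `A_j^k(z) = 0` otherwise. -/
def Acoef (ρ : ℝ) (P : ℕ → Bzy) (j k : ℕ) : Polynomial ℂ :=
  if 1 ≤ j ∧ j ≤ k then
    (j : Polynomial ℂ) * Polynomial.C (ρ : ℂ) * aCoef P (j - 1) (k - j) +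
      (1 + Polynomial.C (ρ : ℂ) * (Polynomial.X - 1)) * aCoef P j (k - j)
  else if j = 0 ∧ k = 0 then 1 + Polynomial.C (ρ : ℂ) * (Polynomial.X - 1)
  else 0

end

/-! At `q = 0` the series `u = z + q(y - z)` reduces to `z`, so the `q^0` part of the functional
equation reads `z P(z) = (1 - ρ + ρ z) ((z - 1) P(0) + P(z))` for `P = P^(0)`, which depends on `z`
only. With `P(0) = 1 - ρ` this is linear in `P` with leading factor `(1 - ρ)(z - 1) ≠ 0`, and its
unique solution is `P(z) = 1 - ρ + ρ z`. -/

open Polynomial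

lemma constantCoeff_comp_substY : (PowerSeries.constantCoeff (R := Bzy)).comp substY = embZ := by
  refine ringHom_ext (fun c => ?_) ?_
  · simp [substY, constHom, embZ]
  · simp [substY, embZ, useries]

lemma constantCoeff_comp_substZY :
    (PowerSeries.constantCoeff (R := Bzy)).comp substZY = eval₂RingHom embZ X := by
  refine ringHom_ext (fun a => ?_) ?_
  · simp [substZY, ← constantCoeff_comp_substY]
  · simp [substZY]

lemma eval₂_embZ_X_of_coeff_eq_C {p : Bzy} (hp : ∀ n, ∃ c : ℂ, p.coeff n = C c) :
    p.eval₂ embZ X = p := by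
  conv_rhs => rw [← eval₂_C_X (p := p)]
  rw [eval₂_eq_sum, eval₂_eq_sum]
  refine Finset.sum_congr rfl fun n _ => ?_
  obtain ⟨c, hc⟩ := hp n
  simp [hc, embZ]

lemma FuncEq.coeff_zero {ρ : ℝ} {P : ℕ → Bzy} (hF : FuncEq ρ P) :
    X * P 0 = (cB (1 - ρ) + cB ρ * X) * ((X - 1) * embZ ((P 0).coeff 0) + (P 0).eval₂ embZ X) := by
  have h := congrArg (PowerSeries.constantCoeff (R := Bzy)) hF
  have hconst (c : ℂ) : PowerSeries.constantCoeff (constHom c) = cB c := rfl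
  have hY (p : ℂ[X]) : PowerSeries.constantCoeff (substY p) = embZ p := by
    rw [← constantCoeff_comp_substY]; rfl
  have hZY (p : Bzy) : PowerSeries.constantCoeff (substZY p) = p.eval₂ embZ X := by
    rw [← coe_eval₂RingHom, ← constantCoeff_comp_substZY]; rfl
  have hu : PowerSeries.constantCoeff useries = X := by simp [useries]
  simpa only [map_mul, map_add, hconst, hu, PowerSeries.constantCoeff_C,
    PowerSeries.constantCoeff_mk, zero_add, Finset.sum_range_one, Nat.sub_self,
    PowerSeries.coeff_zero_eq_constantCoeff_apply, hY, hZY] using h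

/-- With `b = 1 - a` the equation rearranges to `a (z - 1) Q = a (z - 1) (a + b z)`. -/
lemma eq_add_mul_of_mul_eq {R : Type*} [CommRing R] [IsDomain R] {a b z Q : R}
    (hab : a + b = 1) (ha : a ≠ 0) (hz : z - 1 ≠ 0)
    (h : z * Q = (a + b * z) * ((z - 1) * a + Q)) : Q = a + b * z := by
  refine mul_left_cancel₀ (mul_ne_zero ha hz) ?_
  obtain rfl : b = 1 - a := eq_sub_of_add_eq' hab
  linear_combination h

theorem stmt4 (ρ : ℝ) (hρ : ρ ∈ Set.Ioo (0 : ℝ) 1) (P : ℕ → Bzy)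
    (hF : FuncEq ρ P) (hI : IndepY P) (hB : Boundary ρ P) :
    P 0 = 1 + cB (ρ : ℂ) * (Polynomial.X - 1) := by
  obtain ⟨c, hc⟩ := hI 0
  have hcoeff_zero : (P 0).coeff 0 = C (1 - (ρ : ℂ)) := by
    have hB0 := hB.1
    rw [hc, eval_C] at hB0
    rw [hc, hB0]
  have h := hF.coeff_zero
  rw [hcoeff_zero, eval₂_embZ_X_of_coeff_eq_C hI] at h
  have hsum : cB (1 - ρ) + cB ρ = 1 := by simp [cB]
  have hne : cB (1 - ρ) ≠ 0 := by
    rw [cB, ne_eq, C_eq_zero, C_eq_zero, sub_eq_zero]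
    exact_mod_cast hρ.2.ne'
  have hz : (X - 1 : Bzy) ≠ 0 := by simpa using X_sub_C_ne_zero (1 : ℂ[X])
  have hembZ : embZ (C (1 - (ρ : ℂ))) = cB (1 - ρ) := by simp [embZ, cB]
  rw [hembZ] at h
  rw [eq_add_mul_of_mul_eq hsum hne hz h]
  linear_combination hsum
end

section
/- Under the assumptions on F, the coefficients of the power expansion in q satisfy the recursion: for every k ≥ 1, P^(k)(z,y) = Σ_{j=1}^{k} ((y−z)^j / j!)·[ jρ·a_{j−1}^{k−j}(z) + (1+ρ(z−1))·a_j^{k−j}(z) ] + (1+ρ(z−1))·P^(k)(0,z)/(1−ρ), as an identity of polynomials in z and y. -/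
open scoped BigOperators

/-
Put `B_k = P^(k)(0,y) + (P^(k)(z,y) - P^(k)(0,y))/z`, so that
`z B_k = (z-1) P^(k)(0,y) + P^(k)(z,y)` and, after cancelling `z`, the functional equation reads
`F = (1 - ρ + ρu) · B(z,u)`. Since `1 - ρ + ρu = (1 + ρ(z-1)) + qρ(y-z)`, comparing coefficients
of `q^k` and expanding `B(z,u)` by Taylor's formula around `u = z` gives
`P^(k) = (1 + ρ(z-1)) T_k + ρ(y-z) T_{k-1}` with `T_m = Σ_j (y-z)^j/j! a_j^{m-j}`. The only term
of the wrong shape is `a_0^k`, and putting `y = z` in this identity and in the definition of `B_k`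
gives `z a_0^k = (z-1) P^(k)(0,z) + (1 + ρ(z-1)) a_0^k`, i.e. `(1-ρ) a_0^k = P^(k)(0,z)` after
cancelling `z - 1`.
-/

open Polynomial

theorem Finset.sum_Icc_one_eq_sum_range_succ {M : Type*} [AddCommMonoid M] (f : ℕ → M) (n : ℕ) :
    ∑ j ∈ Finset.Icc 1 (n + 1), f j = ∑ i ∈ Finset.range (n + 1), f (i + 1) := by
  rw [← Finset.Ico_add_one_right_eq_Icc, Finset.sum_Ico_eq_sum_range, add_tsub_cancel_right]
  simp only [add_comm 1]

theorem natCast_choose_eq_inv_factorial_mul_descFactorial {K : Type*} [DivisionRing K] [CharZero K]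
    (i n : ℕ) :
    (i.choose n : K) = (n.factorial : K)⁻¹ * i.descFactorial n := by
  rw [Nat.descFactorial_eq_factorial_mul_choose, Nat.cast_mul, inv_mul_cancel_left₀]
  exact_mod_cast n.factorial_ne_zero

noncomputable section

/-- Evaluation at the diagonal `y = z`. -/
def evalDiag : Bzy →+* ℂ[X] := eval₂RingHom (RingHom.id _) X

@[simp] theorem evalDiag_C (a : ℂ[X]) : evalDiag (C a) = a := by simp [evalDiag]

@[simp] theorem evalDiag_X : evalDiag X = X := by simp [evalDiag]

@[simp] theorem evalDiag_yB : evalDiag yB = X := by simp [yB]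

@[simp] theorem evalDiag_cB (c : ℂ) : evalDiag (cB c) = C c := by simp [cB]

@[simp] theorem evalDiag_embZ (p : ℂ[X]) : evalDiag (embZ p) = p := by
  simp [evalDiag, embZ, eval₂_map, eval₂_C_X]

@[simp] theorem embZ_C (c : ℂ) : embZ (C c) = cB c := by simp [embZ, cB]

@[simp] theorem embZ_X : embZ X = X := by simp [embZ]

theorem cB_natCast (n : ℕ) : cB n = n := by simp [cB]

theorem coeff_dy (p : Bzy) (n : ℕ) : (dy p).coeff n = derivative (p.coeff n) := by
  rw [dy, Polynomial.sum_def, finsetSum_coeff]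
  simp only [C_mul_X_pow_eq_monomial, coeff_monomial, Finset.sum_ite_eq', mem_support_iff]
  split_ifs with h
  · rfl
  · rw [not_not.1 h, map_zero]

theorem coeff_iterate_dy (j : ℕ) (p : Bzy) (n : ℕ) :
    (dy^[j] p).coeff n = derivative^[j] (p.coeff n) := by
  induction j generalizing p with
  | zero => rfl
  | succ j ih => rw [Function.iterate_succ_apply, Function.iterate_succ_apply, ih, coeff_dy]

theorem iterate_dy_add (j : ℕ) (p q : Bzy) : dy^[j] (p + q) = dy^[j] p + dy^[j] q := by
  ext1 n
  simp only [coeff_iterate_dy, coeff_add, iterate_map_add]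

theorem iterate_dy_monomial (j m : ℕ) (a : ℂ[X]) :
    dy^[j] (monomial m a) = monomial m (derivative^[j] a) := by
  ext1 n
  rw [coeff_iterate_dy, coeff_monomial, coeff_monomial]
  split_ifs <;> simp

theorem coeff_useries_pow (i n : ℕ) :
    PowerSeries.coeff n (useries ^ i) = i.choose n • ((yB - X) ^ n * X ^ (i - n)) := by
  rw [useries, add_comm, add_pow, map_sum]
  have hterm (k : ℕ) : (PowerSeries.X * PowerSeries.C (yB - X)) ^ k * PowerSeries.C X ^ (i - k) *
      (i.choose k : PowerSeries Bzy) =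
      PowerSeries.C (i.choose k • ((yB - X) ^ k * X ^ (i - k))) * PowerSeries.X ^ k := by
    simp only [mul_pow, ← map_pow, nsmul_eq_mul, map_mul, map_natCast]
    ring
  simp only [hterm, PowerSeries.coeff_C_mul_X_pow, Finset.sum_ite_eq, Finset.mem_range]
  split_ifs with h
  · rfl
  · rw [Nat.choose_eq_zero_of_lt (by omega), zero_smul]

/-- Taylor's formula for the substitution `y ↦ z + q(y - z)`. -/
theorem coeff_substZY (p : Bzy) (n : ℕ) :
    PowerSeries.coeff n (substZY p) =
      cB (n.factorial : ℂ)⁻¹ * (yB - X) ^ n * embZ (evalDiag (dy^[n] p)) := by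
  induction p using Polynomial.induction_on' with
  | add p q hp hq => rw [map_add, map_add, iterate_dy_add, map_add, map_add, hp, hq, mul_add]
  | monomial m a =>
    induction a using Polynomial.induction_on' with
    | add a b ha hb =>
      rw [map_add, map_add, map_add, iterate_dy_add, map_add, map_add, ha, hb, mul_add]
    | monomial i c =>
      have hsubst : substZY (monomial m (monomial i c)) =
          PowerSeries.C (cB c * X ^ m) * useries ^ i := by
        rw [substZY, coe_eval₂RingHom, eval₂_monomial, substY, coe_eval₂RingHom, eval₂_monomial,
          map_mul, map_pow, mul_right_comm]
        rfl
      have hderiv : derivative^[n] (monomial i c) = C (c * i.descFactorial n) * X ^ (i - n) := by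
        rw [← C_mul_X_pow_eq_monomial, iterate_derivative_C_mul,
          iterate_derivative_X_pow_eq_C_mul, ← mul_assoc, ← map_mul]
      rw [hsubst, PowerSeries.coeff_C_mul, coeff_useries_pow, iterate_dy_monomial, hderiv,
        nsmul_eq_mul, ← cB_natCast, natCast_choose_eq_inv_factorial_mul_descFactorial]
      simp [evalDiag, eval₂_monomial, cB]
      ring

theorem X_mul_bracket (P : ℕ → Bzy) (k : ℕ) :
    X * bracket P k = (X - 1) * C ((P k).coeff 0) + P k := by
  have hdiv : X * ((P k - C ((P k).coeff 0)) /ₘ X) = P k - C ((P k).coeff 0) := by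
    simpa using (mul_divByMonic_eq_iff_isRoot (p := P k - C ((P k).coeff 0)) (a := 0)).2
      (by simp [coeff_zero_eq_eval_zero])
  rw [bracket, mul_add, hdiv]
  ring

theorem X_mul_substZY_bracket (P : ℕ → Bzy) (k : ℕ) :
    PowerSeries.C X * substZY (bracket P k) =
      PowerSeries.C (X - 1) * substY ((P k).coeff 0) + substZY (P k) := by
  simpa [substZY] using congrArg substZY (X_mul_bracket P k)

/-- The coefficient of `q^m` in `Σ_k q^k bracket_k(z, z + q(y - z))`, expanded by Taylor's
formula. -/
def taylorCoeff (P : ℕ → Bzy) (m : ℕ) : Bzy :=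
  ∑ j ∈ Finset.range (m + 1), cB (j.factorial : ℂ)⁻¹ * (yB - X) ^ j * embZ (aCoef P j (m - j))

theorem sum_coeff_substZY_bracket (P : ℕ → Bzy) (m : ℕ) :
    ∑ k ∈ Finset.range (m + 1), PowerSeries.coeff (m - k) (substZY (bracket P k)) =
      taylorCoeff P m := by
  rw [taylorCoeff, ← Finset.sum_range_reflect]
  refine Finset.sum_congr rfl fun j hj => ?_
  rw [Nat.add_sub_cancel, Nat.sub_sub_self (Finset.mem_range_succ_iff.1 hj), coeff_substZY]
  rfl

theorem FuncEq.mk_eq {ρ : ℝ} {P : ℕ → Bzy} (hF : FuncEq ρ P) :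
    PowerSeries.mk P =
      (PowerSeries.C (1 + cB ρ * (X - 1)) + PowerSeries.X * PowerSeries.C (cB ρ * (yB - X))) *
        PowerSeries.mk (taylorCoeff P) := by
  have hfactor : constHom (1 - ρ) + constHom ρ * useries =
      PowerSeries.C (1 + cB ρ * (X - 1)) + PowerSeries.X * PowerSeries.C (cB ρ * (yB - X)) := by
    simp only [constHom, useries, cB, RingHom.comp_apply, map_sub, map_one, map_add, map_mul]
    ring
  have hbracket : PowerSeries.C (X - 1) * PowerSeries.mk (fun m => ∑ k ∈ Finset.range (m + 1),
        PowerSeries.coeff (m - k) (substY ((P k).coeff 0))) +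
      PowerSeries.mk (fun m => ∑ k ∈ Finset.range (m + 1),
        PowerSeries.coeff (m - k) (substZY (P k))) =
      PowerSeries.C X * PowerSeries.mk (taylorCoeff P) := by
    ext1 m
    rw [map_add, PowerSeries.coeff_C_mul, PowerSeries.coeff_C_mul, PowerSeries.coeff_mk,
      PowerSeries.coeff_mk, PowerSeries.coeff_mk, ← sum_coeff_substZY_bracket, Finset.mul_sum,
      Finset.mul_sum, ← Finset.sum_add_distrib]
    refine Finset.sum_congr rfl fun k _ => ?_
    rw [← PowerSeries.coeff_C_mul, ← PowerSeries.coeff_C_mul, X_mul_substZY_bracket, map_add,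
      PowerSeries.coeff_C_mul]
  rw [FuncEq, hfactor, hbracket, mul_left_comm] at hF
  exact mul_left_cancel₀ ((map_ne_zero_iff _ PowerSeries.C_injective).2 X_ne_zero) hF

theorem FuncEq.coeff_succ {ρ : ℝ} {P : ℕ → Bzy} (hF : FuncEq ρ P) (n : ℕ) :
    P (n + 1) = (1 + cB ρ * (X - 1)) * taylorCoeff P (n + 1) +
      cB ρ * (yB - X) * taylorCoeff P n := by
  have h := congrArg (PowerSeries.coeff (n + 1)) hF.mk_eq
  rwa [PowerSeries.coeff_mk, add_mul, map_add, PowerSeries.coeff_C_mul, PowerSeries.coeff_mk,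
    mul_assoc, PowerSeries.coeff_succ_X_mul, PowerSeries.coeff_C_mul, PowerSeries.coeff_mk] at h

theorem aCoef_zero (P : ℕ → Bzy) (k : ℕ) : aCoef P 0 k = evalDiag (bracket P k) := rfl

theorem evalDiag_taylorCoeff (P : ℕ → Bzy) (m : ℕ) : evalDiag (taylorCoeff P m) = aCoef P 0 m := by
  rw [taylorCoeff, map_sum, Finset.sum_eq_single_of_mem 0 (Finset.mem_range.2 m.succ_pos)]
  · simp
  · intro j _ hj
    simp [zero_pow hj]

theorem FuncEq.aCoef_zero_succ {ρ : ℝ} {P : ℕ → Bzy} (hF : FuncEq ρ P) (hρ : (ρ : ℂ) ≠ 1)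
    (n : ℕ) : aCoef P 0 (n + 1) = C (1 - (ρ : ℂ))⁻¹ * (P (n + 1)).coeff 0 := by
  have hdiag : evalDiag (P (n + 1)) = (1 + C (ρ : ℂ) * (X - 1)) * aCoef P 0 (n + 1) := by
    simpa [evalDiag_taylorCoeff] using congrArg evalDiag (hF.coeff_succ n)
  have hbracket : X * aCoef P 0 (n + 1) =
      (X - 1) * (P (n + 1)).coeff 0 + evalDiag (P (n + 1)) := by
    simpa [aCoef_zero] using congrArg evalDiag (X_mul_bracket P (n + 1))
  have hcancel : (X - C 1) * (C (1 - (ρ : ℂ)) * aCoef P 0 (n + 1) - (P (n + 1)).coeff 0) = 0 := by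
    rw [map_sub, map_one]
    linear_combination hbracket + hdiag
  rw [mul_eq_zero, or_iff_right (X_sub_C_ne_zero 1), sub_eq_zero] at hcancel
  rw [← hcancel, ← mul_assoc, ← map_mul, inv_mul_cancel₀ (sub_ne_zero.2 hρ.symm), map_one, one_mul]

theorem natCast_succ_mul_cB_inv_factorial_succ (i : ℕ) :
    ((i + 1 : ℕ) : Bzy) * cB ((i + 1).factorial : ℂ)⁻¹ = cB (i.factorial : ℂ)⁻¹ := by
  rw [← cB_natCast]
  simp only [cB, ← map_mul]
  rw [Nat.factorial_succ, Nat.cast_mul, mul_inv,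
    mul_inv_cancel_left₀ (by exact_mod_cast i.succ_ne_zero)]

theorem taylorCoeff_succ (P : ℕ → Bzy) (n : ℕ) :
    taylorCoeff P (n + 1) = embZ (aCoef P 0 (n + 1)) + ∑ j ∈ Finset.Icc 1 (n + 1),
      cB (j.factorial : ℂ)⁻¹ * (yB - X) ^ j * embZ (aCoef P j (n + 1 - j)) := by
  rw [taylorCoeff, Finset.sum_range_succ', Finset.sum_Icc_one_eq_sum_range_succ, add_comm]
  congr 1
  simp [cB]

theorem sub_mul_taylorCoeff (P : ℕ → Bzy) (n : ℕ) :
    (yB - X) * taylorCoeff P n = ∑ j ∈ Finset.Icc 1 (n + 1),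
      (j : Bzy) * cB (j.factorial : ℂ)⁻¹ * (yB - X) ^ j * embZ (aCoef P (j - 1) (n + 1 - j)) := by
  rw [taylorCoeff, Finset.mul_sum, Finset.sum_Icc_one_eq_sum_range_succ]
  refine Finset.sum_congr rfl fun i _ => ?_
  rw [natCast_succ_mul_cB_inv_factorial_succ, add_tsub_cancel_right, Nat.add_sub_add_right]
  ring

end

theorem stmt5_general (ρ : ℝ) (hρ : ρ ∈ Set.Ioo (0 : ℝ) 1) (P : ℕ → Bzy)
    (hF : FuncEq ρ P) :
    ∀ k : ℕ, 1 ≤ k →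
      P k = (∑ j ∈ Finset.Icc 1 k,
          cB ((j.factorial : ℂ)⁻¹) * (yB - Polynomial.X) ^ j *
            ((j : Bzy) * cB (ρ : ℂ) * embZ (aCoef P (j - 1) (k - j)) +
              (1 + cB (ρ : ℂ) * (Polynomial.X - 1)) * embZ (aCoef P j (k - j)))) +
        (1 + cB (ρ : ℂ) * (Polynomial.X - 1)) * cB ((1 - (ρ : ℂ))⁻¹) * embZ ((P k).coeff 0) := by
  intro k hk
  obtain ⟨n, rfl⟩ := Nat.exists_eq_add_of_le' hk
  have hρ1 : (ρ : ℂ) ≠ 1 := by exact_mod_cast hρ.2.ne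
  conv_lhs => rw [hF.coeff_succ n]
  rw [taylorCoeff_succ, mul_assoc (cB ρ), sub_mul_taylorCoeff,
    hF.aCoef_zero_succ hρ1 n, map_mul, embZ_C, mul_add, Finset.mul_sum, Finset.mul_sum,
    add_assoc, ← Finset.sum_add_distrib, add_comm]
  congr 1
  · refine Finset.sum_congr rfl fun j _ => ?_
    ring
  · ring

theorem stmt5 (ρ : ℝ) (hρ : ρ ∈ Set.Ioo (0 : ℝ) 1) (P : ℕ → Bzy)
    (hF : FuncEq ρ P) (hI : IndepY P) (hB : Boundary ρ P) :
    ∀ k : ℕ, 1 ≤ k →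
      P k = (∑ j ∈ Finset.Icc 1 k,
          cB ((j.factorial : ℂ)⁻¹) * (yB - Polynomial.X) ^ j *
            ((j : Bzy) * cB (ρ : ℂ) * embZ (aCoef P (j - 1) (k - j)) +
              (1 + cB (ρ : ℂ) * (Polynomial.X - 1)) * embZ (aCoef P j (k - j)))) +
        (1 + cB (ρ : ℂ) * (Polynomial.X - 1)) * cB ((1 - (ρ : ℂ))⁻¹) * embZ ((P k).coeff 0) :=
  stmt5_general ρ hρ P hF
end

section
/- Under the assumptions on F, the zeroth-order family satisfies a_j^0(z) = δ_{j,0} for every j ≥ 0; that is, a_0^0(z) is identically 1 and a_j^0(z) is identically 0 for j ≥ 1. -/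
open scoped BigOperators

/-!
Only the `q⁰` coefficient of the functional equation matters. Since `u ≡ z (mod q)` and
`P⁽⁰⁾ = g(z)` does not depend on `y`, it reads `z g = (1 - ρ + ρz)((z - 1) g(0) + g)`, i.e.
`(1 - ρ)(z - 1) g = (1 - ρ + ρz)(z - 1) g(0)`. With `g(0) = 1 - ρ` from the boundary condition
this forces `g = 1 - ρ + ρz`, whose bracket `g(0) + (g - g(0))/z` is the constant `1`; all its
`y`-derivatives vanish.
-/

section
open Polynomial

lemma constantCoeff_useries : PowerSeries.constantCoeff useries = (X : Bzy) := by
  simp [useries]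

lemma constantCoeff_constHom (c : ℂ) : PowerSeries.constantCoeff (constHom c) = embZ (C c) := by
  simp [constHom, embZ]

lemma constantCoeff_substY (p : ℂ[X]) : PowerSeries.constantCoeff (substY p) = embZ p := by
  have : PowerSeries.constantCoeff.comp substY = embZ := by
    refine ringHom_ext (fun c => ?_) ?_
    · simp [substY, constHom, embZ]
    · simp [substY, embZ, constantCoeff_useries]
  exact RingHom.congr_fun this p

lemma constantCoeff_substZY_embZ (g : ℂ[X]) :
    PowerSeries.constantCoeff (substZY (embZ g)) = embZ g := by
  have : (PowerSeries.constantCoeff.comp substZY).comp embZ = embZ := by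
    refine ringHom_ext (fun c => ?_) ?_
    · simp [substZY, substY, constHom, embZ]
    · simp [substZY, embZ]
  exact RingHom.congr_fun this g

lemma FuncEq.zeroth_order {ρ : ℝ} {P : ℕ → Bzy} {g : ℂ[X]} (hF : FuncEq ρ P)
    (hg : embZ g = P 0) :
    X * g = (C (1 - (ρ : ℂ)) + C (ρ : ℂ) * X) * ((X - 1) * C (g.coeff 0) + g) := by
  have h := congrArg PowerSeries.constantCoeff hF
  simp only [map_mul, map_add, map_sub, map_one, PowerSeries.constantCoeff_C,
    PowerSeries.constantCoeff_mk, zero_add, Finset.sum_range_one, Nat.sub_self,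
    PowerSeries.coeff_zero_eq_constantCoeff_apply, ← hg, constantCoeff_constHom,
    constantCoeff_useries, constantCoeff_substY, constantCoeff_substZY_embZ] at h
  apply map_injective C C_injective
  simpa [embZ] using h

lemma eq_C_add_C_mul_X_of_X_mul_eq {K : Type*} [Field K] {ρ : K} (hρ : ρ ≠ 1) {g : K[X]}
    (h : X * g = (C (1 - ρ) + C ρ * X) * ((X - 1) * C (1 - ρ) + g)) :
    g = C (1 - ρ) + C ρ * X := by
  have hfactor : C (1 - ρ) * (X - 1) * (g - (C (1 - ρ) + C ρ * X)) = 0 := by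
    simp only [map_sub, map_one] at h ⊢
    linear_combination h
  have h1 : C (1 - ρ) ≠ 0 := C_ne_zero.2 (sub_ne_zero.2 hρ.symm)
  have hX : (X - 1 : K[X]) ≠ 0 := X_sub_C_ne_zero 1
  exact sub_eq_zero.1 ((mul_eq_zero.1 hfactor).resolve_left (mul_ne_zero h1 hX))

lemma bracket_eq_C_add {P : ℕ → Bzy} {k : ℕ} {a b : ℂ[X]} (h : P k = C a + C b * X) :
    bracket P k = C (a + b) := by
  rw [bracket, h, coeff_add, coeff_C_zero, coeff_C_mul_X, if_neg zero_ne_one, add_zero,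
    add_sub_cancel_left, mul_comm, mul_divByMonic_cancel_left _ monic_X, C_add]

lemma dy_C (a : ℂ[X]) : dy (C a) = C (derivative a) := by
  simp [dy, sum_C_index]

lemma iterate_dy_one (j : ℕ) : dy^[j] 1 = if j = 0 then 1 else 0 := by
  induction j with
  | zero => rfl
  | succ j ih =>
    rw [Function.iterate_succ_apply', ih, if_neg j.succ_ne_zero]
    split_ifs
    · simpa using dy_C 1
    · simpa using dy_C 0

end

theorem stmt7 (ρ : ℝ) (hρ : ρ ∈ Set.Ioo (0 : ℝ) 1) (P : ℕ → Bzy)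
    (hF : FuncEq ρ P) (hI : IndepY P) (hB : Boundary ρ P) :
    ∀ j : ℕ, aCoef P j 0 = if j = 0 then 1 else 0 := by
  obtain ⟨g, hg⟩ : ∃ g, embZ g = P 0 :=
    (Polynomial.lifts_iff_coeff_lifts _).2 fun n => (hI n).imp fun c hc => hc.symm
  have hg0 : g.coeff 0 = 1 - ρ := by simpa [← hg, embZ] using hB.1
  have hlin : g = .C (1 - (ρ : ℂ)) + .C (ρ : ℂ) * .X :=
    eq_C_add_C_mul_X_of_X_mul_eq (by exact_mod_cast hρ.2.ne) (hg0 ▸ hF.zeroth_order hg)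
  have hbracket : bracket P 0 = 1 := by
    rw [bracket_eq_C_add (a := .C (1 - (ρ : ℂ))) (b := .C (ρ : ℂ)) (by simp [← hg, hlin, embZ])]
    simp
  intro j
  rw [aCoef, hbracket, iterate_dy_one]
  split_ifs <;> simp
end

section
/- Under the assumptions on F, for every k ≥ 2 the polynomial A_k^k(z) is identically zero; consequently, in the recursion for P^(k)(z,y) with k ≥ 2 the summation index effectively runs only from 1 to k−1. -/
open scoped BigOperators

/-! Since `P^(0)` does not depend on `y`, neither does the bracket
`P^(0)(0,y) + (P^(0)(z,y) - P^(0)(0,y))/z`, so all its `y`-derivatives vanish: `a_j^0 = 0` for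
`j ≥ 1`. For `k ≥ 2` the coefficient `A_k^k` involves only `a_{k-1}^0` and `a_k^0`, hence
vanishes, and with it the top summand `j = k` of the recursion. -/

open Polynomial

namespace Polynomial

theorem sub_C_coeff_zero_divByMonic_X {R : Type*} [CommRing R] (p : R[X]) :
    (p - C (p.coeff 0)) /ₘ X = p.divX := by
  rw [← eq_sub_of_add_eq (X_mul_divX_add p)]
  exact mul_divByMonic_cancel_left p.divX monic_X

end Polynomial

def IsConstInY (p : Bzy) : Prop := ∀ n, ∃ c : ℂ, p.coeff n = C c

namespace IsConstInY

variable {p q : Bzy}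

theorem add (hp : IsConstInY p) (hq : IsConstInY q) : IsConstInY (p + q) := fun n => by
  obtain ⟨a, ha⟩ := hp n
  obtain ⟨b, hb⟩ := hq n
  exact ⟨a + b, by simp [ha, hb]⟩

theorem C_coeff_zero (hp : IsConstInY p) : IsConstInY (C (p.coeff 0)) := fun n => by
  obtain ⟨c, hc⟩ := hp 0
  rcases n with _ | n
  · exact ⟨c, by simp [hc]⟩
  · exact ⟨0, by simp⟩

theorem divX (hp : IsConstInY p) : IsConstInY p.divX := fun n => by
  simpa only [coeff_divX] using hp (n + 1)

theorem dy_eq_zero (hp : IsConstInY p) : dy p = 0 := by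
  refine Finset.sum_eq_zero fun n _ => ?_
  obtain ⟨c, hc⟩ := hp n
  simp [hc]

end IsConstInY

theorem dy_zero : dy 0 = 0 := by
  simp [dy]

theorem bracket_eq (P : ℕ → Bzy) (k : ℕ) : bracket P k = C ((P k).coeff 0) + (P k).divX := by
  rw [bracket, sub_C_coeff_zero_divByMonic_X]

theorem isConstInY_bracket_zero {P : ℕ → Bzy} (hI : IndepY P) : IsConstInY (bracket P 0) := by
  have hP0 : IsConstInY (P 0) := hI
  rw [bracket_eq]
  exact hP0.C_coeff_zero.add hP0.divX

theorem aCoef_zero_eq_zero {P : ℕ → Bzy} (hI : IndepY P) {j : ℕ} (hj : j ≠ 0) :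
    aCoef P j 0 = 0 := by
  obtain ⟨i, rfl⟩ := Nat.exists_eq_succ_of_ne_zero hj
  rw [aCoef, Function.iterate_succ_apply, (isConstInY_bracket_zero hI).dy_eq_zero,
    Function.iterate_fixed dy_zero, eval₂_zero]

theorem Acoef_self_eq_zero (ρ : ℝ) {P : ℕ → Bzy} (hI : IndepY P) {k : ℕ} (hk : 2 ≤ k) :
    Acoef ρ P k k = 0 := by
  rw [Acoef, if_pos ⟨by omega, le_rfl⟩, Nat.sub_self, aCoef_zero_eq_zero hI (by omega),
    aCoef_zero_eq_zero hI (by omega), mul_zero, mul_zero, add_zero]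

theorem stmt8_general (ρ : ℝ) (P : ℕ → Bzy) (hI : IndepY P) :
    ∀ k : ℕ, 2 ≤ k → Acoef ρ P k k = 0 ∧
      (∑ j ∈ Finset.Icc 1 k,
          cB ((j.factorial : ℂ)⁻¹) * (yB - Polynomial.X) ^ j *
            ((j : Bzy) * cB (ρ : ℂ) * embZ (aCoef P (j - 1) (k - j)) +
              (1 + cB (ρ : ℂ) * (Polynomial.X - 1)) * embZ (aCoef P j (k - j)))) =
        ∑ j ∈ Finset.Icc 1 (k - 1),
          cB ((j.factorial : ℂ)⁻¹) * (yB - Polynomial.X) ^ j *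
            ((j : Bzy) * cB (ρ : ℂ) * embZ (aCoef P (j - 1) (k - j)) +
              (1 + cB (ρ : ℂ) * (Polynomial.X - 1)) * embZ (aCoef P j (k - j))) := by
  intro k hk
  refine ⟨Acoef_self_eq_zero ρ hI hk, ?_⟩
  obtain ⟨m, rfl⟩ : ∃ m, k = m + 1 := ⟨k - 1, by omega⟩
  rw [Finset.sum_Icc_succ_top (by omega), Nat.add_sub_cancel, Nat.sub_self,
    aCoef_zero_eq_zero hI (by omega), aCoef_zero_eq_zero hI (by omega)]
  simp

theorem stmt8 (ρ : ℝ) (hρ : ρ ∈ Set.Ioo (0 : ℝ) 1) (P : ℕ → Bzy)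
    (hF : FuncEq ρ P) (hI : IndepY P) (hB : Boundary ρ P) :
    ∀ k : ℕ, 2 ≤ k → Acoef ρ P k k = 0 ∧
      (∑ j ∈ Finset.Icc 1 k,
          cB ((j.factorial : ℂ)⁻¹) * (yB - Polynomial.X) ^ j *
            ((j : Bzy) * cB (ρ : ℂ) * embZ (aCoef P (j - 1) (k - j)) +
              (1 + cB (ρ : ℂ) * (Polynomial.X - 1)) * embZ (aCoef P j (k - j)))) =
        ∑ j ∈ Finset.Icc 1 (k - 1),
          cB ((j.factorial : ℂ)⁻¹) * (yB - Polynomial.X) ^ j *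
            ((j : Bzy) * cB (ρ : ℂ) * embZ (aCoef P (j - 1) (k - j)) +
              (1 + cB (ρ : ℂ) * (Polynomial.X - 1)) * embZ (aCoef P j (k - j))) :=
  stmt8_general ρ P hI
end
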